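/- Let d ≥ 2, let π : ℝ^d_{++} → ℝ be convex and positively homogeneous of degree 1, and let π̂ : ℝ^d_{++} → ℝ be continuous and positively homogeneous of degree 1 (not necessarily convex). Let P̄ ⊆ ℝ^d_{++} be nonempty, convex, and compact, and define Y_P̄ = {y : p·y ≤ π(p) for all p ∈ P̄} and Ŷ_P̄ = {y : p·y ≤ π̂(p) for all p ∈ P̄}, with Ŷ_P̄ nonempty. Set η = sup_{p∈P̄} |π(p) − π̂(p)|/‖p‖, R = sup_{p∈P̄} π(p)/‖p‖, and r = inf_{p∈P̄} π(p)/‖p‖. If 0 < r < R < ∞ and η < r, then d_H(Y_P̄, Ŷ_P̄) ≤ η · (R/r) · (1 + η/R)/(1 − η/r). -/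

import Mathlib

open scoped RealInnerProductSpace

/-- The strictly positive orthant of `ℝ^d`. -/
def posOrthant (d : ℕ) : Set (EuclideanSpace ℝ (Fin d)) := {p | ∀ i, 0 < p i}

/-!
Let `B = {z | ⟪p, z⟫ ≤ b p ∀ p ∈ S}` and let `P` be the metric projection of `y` onto `B`.
The residual `y - P` lies in the normal cone of `B` at `P`, which is contained in the closed
conic hull of `S`; if `⟪p, y⟫ ≤ M ‖p‖` on `S` (and `S` is convex), the same bound holds for
`y - P`. If moreover `c • y ∈ B`, testing the variational inequality at `c • y` gives
`‖y - P‖² ≤ (1 - c) ⟪y - P, y⟫ ≤ (1 - c) M ‖y - P‖`. The two inclusions of the Hausdorff bound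
follow with `c = 1 - η / r`, `M = R` and `c = r / (r + η)`, `M = R + η`, because
`r ‖p‖ ≤ π p` lets the additive error `η ‖p‖` be absorbed multiplicatively.
-/

open Set Filter Topology ProperCone

variable {E : Type*} [NormedAddCommGroup E] [InnerProductSpace ℝ E]

def productionSet (S : Set E) (b : E → ℝ) : Set E := {y | ∀ p ∈ S, ⟪p, y⟫ ≤ b p}

variable {S : Set E} {b : E → ℝ}

lemma convex_productionSet : Convex ℝ (productionSet S b) := by
  simp only [productionSet, ofPred_forall]
  exact convex_iInter₂ fun p _ => convex_halfSpace_le (innerₛₗ ℝ p).isLinear (b p)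

lemma isClosed_productionSet : IsClosed (productionSet S b) := by
  simp only [productionSet, ofPred_forall]
  exact isClosed_biInter fun p _ =>
    isClosed_le (continuous_const.inner continuous_id) continuous_const

lemma smul_mem_productionSet {b' : E → ℝ} {c : ℝ} {y : E} (hc : 0 ≤ c)
    (hbb' : ∀ p ∈ S, c * b p ≤ b' p) (hy : y ∈ productionSet S b) :
    c • y ∈ productionSet S b' := fun p hp => by
  rw [real_inner_smul_right]
  exact (mul_le_mul_of_nonneg_left (hy p hp) hc).trans (hbb' p hp)

lemma inner_le_mul_norm_of_mem_closure_hull (hS : Convex ℝ S) {y : E} {M : ℝ}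
    (hSy : ∀ p ∈ S, ⟪p, y⟫ ≤ M * ‖p‖) {x : E} (hx : x ∈ closure (ConvexCone.hull ℝ S : Set E)) :
    ⟪x, y⟫ ≤ M * ‖x‖ := by
  have hcone : (ConvexCone.hull ℝ S : Set E) ⊆ {x | ⟪x, y⟫ ≤ M * ‖x‖} := by
    intro x hx
    obtain ⟨t, ht, p, hp, rfl⟩ := (ConvexCone.mem_hull_of_convex hS).1 hx
    show ⟪t • p, y⟫ ≤ M * ‖t • p‖
    rw [real_inner_smul_left, norm_smul, Real.norm_of_nonneg ht.le, mul_left_comm]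
    exact mul_le_mul_of_nonneg_left (hSy p hp) ht.le
  exact closure_minimal hcone
    (isClosed_le (continuous_id.inner continuous_const) (continuous_const.mul continuous_norm)) hx

section CompleteSpace

variable [CompleteSpace E]

lemma sub_mem_innerDual_innerDual_of_inner_sub_nonpos {y P : E} (hP : P ∈ productionSet S b)
    (hnormal : ∀ w ∈ productionSet S b, ⟪y - P, w - P⟫ ≤ 0) :
    y - P ∈ innerDual (innerDual S : Set E) := by
  rw [mem_innerDual]
  intro u hu
  have h := hnormal (P - u) fun p hp => by
    rw [inner_sub_right]
    linarith [hP p hp, mem_innerDual.1 hu hp]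
  rw [sub_sub_cancel_left, inner_neg_right, real_inner_comm] at h
  linarith

lemma innerDual_innerDual_subset_closure_hull (hS : S.Nonempty) :
    (innerDual (innerDual S : Set E) : Set E) ⊆ closure (ConvexCone.hull ℝ S : Set E) := by
  obtain ⟨p, hp⟩ := hS
  have h0 : (0 : E) ∈ closure (ConvexCone.hull ℝ S : Set E) := by
    have htend : Tendsto (fun t : ℝ => t • p) (𝓝[>] 0) (𝓝 0) :=
      ((continuous_id.smul continuous_const).tendsto' 0 0 (zero_smul ℝ p)).mono_left
        nhdsWithin_le_nhds
    exact mem_closure_of_tendsto htend (eventually_nhdsWithin_of_forall fun t ht =>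
      (ConvexCone.hull ℝ S).smul_mem ht (ConvexCone.subset_hull hp))
  let K : ProperCone ℝ E := ⟨(ConvexCone.hull ℝ S).closure.toPointedCone h0, isClosed_closure⟩
  have hSK : S ⊆ K := fun q hq => subset_closure (ConvexCone.subset_hull hq)
  have hK := innerDual_le_innerDual (innerDual_le_innerDual hSK)
  rw [innerDual_innerDual] at hK
  exact fun x hx => hK hx

lemma exists_mem_productionSet_dist_le (hSc : Convex ℝ S) (hSne : S.Nonempty) {y : E}
    {M c : ℝ} (hM : 0 ≤ M) (hc : c ≤ 1) (hy : ∀ p ∈ S, ⟪p, y⟫ ≤ M * ‖p‖)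
    (hcy : c • y ∈ productionSet S b) :
    ∃ z ∈ productionSet S b, dist y z ≤ (1 - c) * M := by
  obtain ⟨P, hP, hPmin⟩ := exists_norm_eq_iInf_of_complete_convex ⟨_, hcy⟩
    isClosed_productionSet.isComplete convex_productionSet y
  have hnormal := (norm_eq_iInf_iff_real_inner_le_zero convex_productionSet hP).1 hPmin
  have hvy : ⟪y - P, y⟫ ≤ M * ‖y - P‖ := inner_le_mul_norm_of_mem_closure_hull hSc hy
    (innerDual_innerDual_subset_closure_hull hSne
      (sub_mem_innerDual_innerDual_of_inner_sub_nonpos hP hnormal))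
  have hvv : ‖y - P‖ ^ 2 ≤ (1 - c) * ⟪y - P, y⟫ := by
    have h := hnormal (c • y) hcy
    rw [show c • y - P = (y - P) - (1 - c) • y by rw [sub_smul, one_smul]; abel,
      inner_sub_right, real_inner_smul_right, real_inner_self_eq_norm_sq] at h
    linarith
  refine ⟨P, hP, ?_⟩
  rw [dist_eq_norm]
  nlinarith [norm_nonneg (y - P), mul_le_mul_of_nonneg_left hvy (sub_nonneg.2 hc),
    mul_nonneg (sub_nonneg.2 hc) hM]

lemma hausdorffDist_productionSet_le (hSc : Convex ℝ S) (hSne : S.Nonempty) {f g : E → ℝ}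
    {η r R : ℝ} (hη : 0 ≤ η) (hηr : η < r) (hR : 0 ≤ R) (hfr : ∀ p ∈ S, r * ‖p‖ ≤ f p)
    (hfR : ∀ p ∈ S, f p ≤ R * ‖p‖) (hfg : ∀ p ∈ S, |f p - g p| ≤ η * ‖p‖) :
    Metric.hausdorffDist (productionSet S f) (productionSet S g) ≤ η * (R + η) / (r - η) := by
  have hr : 0 < r := hη.trans_lt hηr
  have hηf : ∀ p ∈ S, η * ‖p‖ ≤ η / r * f p := fun p hp => by
    rw [div_mul_eq_mul_div, le_div_iff₀ hr]
    nlinarith [hfr p hp]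
  apply Metric.hausdorffDist_le_of_mem_dist (by have := sub_pos.2 hηr; positivity)
  · intro y hy
    obtain ⟨z, hz, hyz⟩ := exists_mem_productionSet_dist_le (b := g) (c := 1 - η / r) hSc hSne hR
      (by linarith [div_nonneg hη hr.le]) (fun p hp => (hy p hp).trans (hfR p hp))
      (smul_mem_productionSet (by rw [sub_nonneg, div_le_one hr]; exact hηr.le)
        (fun p hp => by linarith [hηf p hp, (abs_le.1 (hfg p hp)).2]) hy)
    refine ⟨z, hz, hyz.trans ?_⟩
    rw [sub_sub_cancel, div_mul_eq_mul_div, div_le_div_iff₀ hr (sub_pos.2 hηr)]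
    nlinarith [mul_nonneg (mul_nonneg hη hη) hR, mul_nonneg (mul_nonneg hη hη) hr.le]
  · intro y hy
    have hrη : 0 < r + η := by linarith
    obtain ⟨z, hz, hyz⟩ := exists_mem_productionSet_dist_le (b := f) (c := r / (r + η)) hSc hSne
      (by linarith : 0 ≤ R + η) (by rw [div_le_one hrη]; linarith)
      (fun p hp => by linarith [hy p hp, (abs_le.1 (hfg p hp)).1, hfR p hp])
      (smul_mem_productionSet (by positivity)
        (fun p hp => by
          rw [div_mul_eq_mul_div, div_le_iff₀ hrη]
          nlinarith [mul_le_mul_of_nonneg_left (hfr p hp) hη, (abs_le.1 (hfg p hp)).1])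
        hy)
    refine ⟨z, hz, hyz.trans ?_⟩
    rw [show 1 - r / (r + η) = η / (r + η) by field_simp; ring, div_mul_eq_mul_div,
      div_le_div_iff₀ hrη (sub_pos.2 hηr)]
    nlinarith [mul_nonneg (mul_nonneg hη hη) (by linarith : (0:ℝ) ≤ R + η)]

end CompleteSpace

lemma isOpen_posOrthant (d : ℕ) : IsOpen (posOrthant d) := by
  simp only [posOrthant, ofPred_forall]
  exact isOpen_iInter_of_finite fun i => isOpen_lt continuous_const (by fun_prop)

theorem stmt7_general (d : ℕ)
    (prof profhat : EuclideanSpace ℝ (Fin d) → ℝ)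
    (hconv : ConvexOn ℝ (posOrthant d) prof)
    (hhatcont : ContinuousOn profhat (posOrthant d))
    (Pb : Set (EuclideanSpace ℝ (Fin d))) (hPbne : Pb.Nonempty)
    (hPbconv : Convex ℝ Pb) (hPbcomp : IsCompact Pb) (hPbpos : Pb ⊆ posOrthant d)
    (eta R r : ℝ)
    (heta : eta = sSup ((fun p => |prof p - profhat p| / ‖p‖) '' Pb))
    (hR : R = sSup ((fun p => prof p / ‖p‖) '' Pb))
    (hrdef : r = sInf ((fun p => prof p / ‖p‖) '' Pb))
    (hrpos : 0 < r) (hrR : r < R) (hetar : eta < r) :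
    Metric.hausdorffDist
        {y : EuclideanSpace ℝ (Fin d) | ∀ p ∈ Pb, ⟪p, y⟫ ≤ prof p}
        {y : EuclideanSpace ℝ (Fin d) | ∀ p ∈ Pb, ⟪p, y⟫ ≤ profhat p}
      ≤ eta * (R / r) * ((1 + eta / R) / (1 - eta / r)) := by
  have hRbdd : BddAbove ((fun p => prof p / ‖p‖) '' Pb) := by
    by_contra h
    rw [Real.sSup_of_not_bddAbove h] at hR
    linarith
  have hrbdd : BddBelow ((fun p => prof p / ‖p‖) '' Pb) := by
    by_contra h
    rw [Real.sInf_of_not_bddBelow h] at hrdef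
    linarith
  have hr : ∀ p ∈ Pb, r ≤ prof p / ‖p‖ := fun p hp => hrdef ▸ csInf_le hrbdd (mem_image_of_mem _ hp)
  -- `prof p / ‖p‖` is `0` when `p = 0`, which is excluded by `0 < r`.
  have hnorm : ∀ p ∈ Pb, 0 < ‖p‖ := fun p hp =>
    (norm_nonneg p).lt_of_ne fun h => by simpa [← h] using hrpos.trans_le (hr p hp)
  have hcont : ContinuousOn (fun p => |prof p - profhat p| / ‖p‖) Pb :=
    (((hconv.continuousOn (isOpen_posOrthant d)).sub hhatcont).mono hPbpos).abs.div
      continuous_norm.continuousOn fun p hp => (hnorm p hp).ne'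
  have hη : ∀ p ∈ Pb, |prof p - profhat p| / ‖p‖ ≤ eta := fun p hp =>
    heta ▸ le_csSup (hPbcomp.bddAbove_image hcont) (mem_image_of_mem _ hp)
  have hη0 : 0 ≤ eta := heta ▸ Real.sSup_nonneg (forall_mem_image.2 fun p _ => by positivity)
  have hbound : eta * (R / r) * ((1 + eta / R) / (1 - eta / r)) = eta * (R + eta) / (r - eta) := by
    have hR0 : R ≠ 0 := (hrpos.trans hrR).ne'
    have hrη : r - eta ≠ 0 := (sub_pos.2 hetar).ne'
    field_simp
  rw [hbound]
  exact hausdorffDist_productionSet_le hPbconv hPbne hη0 hetar (hrpos.trans hrR).le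
    (fun p hp => (le_div_iff₀ (hnorm p hp)).1 (hr p hp))
    (fun p hp => (div_le_iff₀ (hnorm p hp)).1 (hR ▸ le_csSup hRbdd (mem_image_of_mem _ hp)))
    (fun p hp => (div_le_iff₀ (hnorm p hp)).1 (hη p hp))

/-- Deterministic content of Proposition 7.1: a possibly nonconvex, continuous,
positively homogeneous degree-1 estimator `π̂` of a convex homogeneous profit function
`π` induces a production set whose Hausdorff distance from the true one is bounded by
`η (R/r) (1 + η/R)/(1 − η/r)`. -/
theorem stmt7 (d : ℕ) (hd : 2 ≤ d)
    (prof profhat : EuclideanSpace ℝ (Fin d) → ℝ)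
    (hconv : ConvexOn ℝ (posOrthant d) prof)
    (hhom : ∀ p ∈ posOrthant d, ∀ l : ℝ, 0 < l → prof (l • p) = l * prof p)
    (hhatcont : ContinuousOn profhat (posOrthant d))
    (hhathom : ∀ p ∈ posOrthant d, ∀ l : ℝ, 0 < l → profhat (l • p) = l * profhat p)
    (Pb : Set (EuclideanSpace ℝ (Fin d))) (hPbne : Pb.Nonempty)
    (hPbconv : Convex ℝ Pb) (hPbcomp : IsCompact Pb) (hPbpos : Pb ⊆ posOrthant d)
    (hYhatne : {y : EuclideanSpace ℝ (Fin d) | ∀ p ∈ Pb, ⟪p, y⟫ ≤ profhat p}.Nonempty)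
    (eta R r : ℝ)
    (heta : eta = sSup ((fun p => |prof p - profhat p| / ‖p‖) '' Pb))
    (hR : R = sSup ((fun p => prof p / ‖p‖) '' Pb))
    (hrdef : r = sInf ((fun p => prof p / ‖p‖) '' Pb))
    (hrpos : 0 < r) (hrR : r < R) (hetar : eta < r) :
    Metric.hausdorffDist
        {y : EuclideanSpace ℝ (Fin d) | ∀ p ∈ Pb, ⟪p, y⟫ ≤ prof p}
        {y : EuclideanSpace ℝ (Fin d) | ∀ p ∈ Pb, ⟪p, y⟫ ≤ profhat p}
      ≤ eta * (R / r) * ((1 + eta / R) / (1 - eta / r)) :=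
  stmt7_general d prof profhat hconv hhatcont Pb hPbne hPbconv hPbcomp hPbpos eta R r heta hR hrdef
    hrpos hrR hetar
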